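/- In any group operad 𝒢, for every k ∈ ℕ and every x ∈ G k one has γ(e₃; e₀, x, e₀) = x, as elements of G(0 + k + 0) = G k, where e₃ and e₀ are the group units of G 3 and G 0 respectively. -/

import Mathlib

/-- Splitting a sigma type over `Option`. -/
def sigmaOptionEquiv {γ : Type*} (β : Option γ → Type*) :
    (Σ o : Option γ, β o) ≃ (β none ⊕ Σ c : γ, β (some c)) where
  toFun := fun x => match x with
    | ⟨none, b⟩ => .inl b
    | ⟨some c, b⟩ => .inr ⟨c, b⟩
  invFun := fun x => match x with
    | .inl b => ⟨none, b⟩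
    | .inr ⟨c, b⟩ => ⟨some c, b⟩
  left_inv := fun ⟨o, b⟩ => by cases o <;> rfl
  right_inv := fun x => by rcases x with b | ⟨c, b⟩ <;> rfl

/-- The order-preserving flattening equivalence
`(Σ i : Fin n, Fin (k i)) ≃ Fin (∑ i, k i)`, listing the blocks in
increasing order of the index. -/
def finSigmaFinEquivOrd : {n : ℕ} → {k : Fin n → ℕ} → (Σ i : Fin n, Fin (k i)) ≃ Fin (∑ i, k i)
  | 0, k => ((Equiv.equivOfIsEmpty (Σ i : Fin 0, Fin (k i)) (Fin 0)).trans
      (finCongr (show 0 = ∑ i : Fin 0, k i by simp)))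
  | (n+1), k =>
    ((Equiv.sigmaCongrLeft (β := fun i => Fin (k i)) (finSuccEquiv n).symm).symm.trans
      ((sigmaOptionEquiv fun o => Fin (k ((finSuccEquiv n).symm o))).trans
        ((Equiv.sumCongr (finCongr (congrArg k (finSuccEquiv_symm_none)))
            ((Equiv.sigmaCongrRight fun c =>
                finCongr (congrArg k (finSuccEquiv_symm_some c))).trans
              finSigmaFinEquivOrd)).trans
          (finSumFinEquiv.trans (finCongr (Fin.sum_univ_succ k).symm)))))

/-- Block-permutation composition in the operad of symmetric groups. -/
def blockComp {n : ℕ} (k : Fin n → ℕ) (σ : Equiv.Perm (Fin n))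
    (σs : ∀ i, Equiv.Perm (Fin (k i))) : Equiv.Perm (Fin (∑ i, k i)) :=
  finSigmaFinEquivOrd.symm.trans <|
    (Equiv.sigmaCongr σ fun i =>
        (σs i).trans (finCongr (congrArg k (σ.symm_apply_apply i).symm))).trans <|
      finSigmaFinEquivOrd.trans (finCongr (Equiv.sum_comp σ.symm k))

theorem flatten_sum_eq {n : ℕ} (k : Fin n → ℕ) (l : ∀ i : Fin n, Fin (k i) → ℕ) :
    (∑ j : Fin (∑ i, k i), l (finSigmaFinEquivOrd.symm j).1 (finSigmaFinEquivOrd.symm j).2)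
      = ∑ i, ∑ s, l i s := by
  rw [Fintype.sum_equiv finSigmaFinEquivOrd.symm _ (fun a => l a.1 a.2) (fun _ => rfl)]
  rw [← Finset.univ_sigma_univ, Finset.sum_sigma]

/-- Transport an element of `G m` along an equality `m = n` of levels. -/
def gcast (G : ℕ → Type) {m n : ℕ} (h : m = n) (x : G m) : G n := h ▸ x

/-- A group operad: a planar operad `G` with a group structure on each level,
a map of operads `π` to the operad of symmetric groups which is a levelwise
group homomorphism, subject to the interchange law. -/
structure GroupOperad (G : ℕ → Type) [∀ n, Group (G n)] where
  /-- operadic composition -/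
  γ : ∀ {n : ℕ} {k : Fin n → ℕ}, G n → (∀ i, G (k i)) → G (∑ i, k i)
  /-- the operad identity -/
  e : G 1
  /-- the levelwise group homomorphisms to the symmetric groups -/
  π : ∀ {n : ℕ}, G n →* Equiv.Perm (Fin n)
  π_e : π e = 1
  γ_id : ∀ {n : ℕ} (x : G n),
    gcast G (show (∑ _i : Fin 1, n) = n by simp)
      (γ (k := fun _ : Fin 1 => n) e fun _ => x) = x
  id_γ : ∀ {n : ℕ} (x : G n),
    gcast G (show (∑ _i : Fin n, 1) = n by simp)
      (γ (k := fun _ : Fin n => 1) x fun _ => e) = x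
  γ_assoc : ∀ {n : ℕ} {k : Fin n → ℕ} {l : ∀ i : Fin n, Fin (k i) → ℕ}
      (x : G n) (xs : ∀ i, G (k i)) (ys : ∀ i s, G (l i s)),
    gcast G (flatten_sum_eq k l)
        (γ (k := fun j => l (finSigmaFinEquivOrd.symm j).1 (finSigmaFinEquivOrd.symm j).2)
          (γ x xs) fun j => ys (finSigmaFinEquivOrd.symm j).1 (finSigmaFinEquivOrd.symm j).2)
      = γ x fun i => γ (xs i) (ys i)
  π_γ : ∀ {n : ℕ} {k : Fin n → ℕ} (x : G n) (xs : ∀ i, G (k i)),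
    π (γ x xs) = blockComp k (π x) fun i => π (xs i)
  interchange : ∀ {n : ℕ} {k : Fin n → ℕ} (x y : G n) (xs ys : ∀ i, G (k i)),
    γ (x * y) (fun i => xs i * ys i)
      = gcast G (Equiv.sum_comp (π y).symm k)
          (γ (k := fun j => k ((π y).symm j)) x fun j => xs ((π y).symm j))
        * γ y ys

/-- A vector of three natural numbers, as a function on `Fin 3`. -/
def v3 (p q r : ℕ) : Fin 3 → ℕ
  | ⟨0, _⟩ => p
  | ⟨1, _⟩ => q
  | ⟨2, _⟩ => r

/-- A triple of elements of the graded family `G`, indexed over `v3 p q r`. -/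
def f3 {G : ℕ → Type} {p q r : ℕ} (a : G p) (b : G q) (c : G r) :
    ∀ i : Fin 3, G (v3 p q r i)
  | ⟨0, _⟩ => a
  | ⟨1, _⟩ => b
  | ⟨2, _⟩ => c

theorem sum_v3 (p q r : ℕ) : (∑ i, v3 p q r i) = p + q + r := by
  rw [Fin.sum_univ_three]; rfl

/-- A vector of two natural numbers, as a function on `Fin 2`. -/
def v2 (p q : ℕ) : Fin 2 → ℕ
  | ⟨0, _⟩ => p
  | ⟨1, _⟩ => q

/-- A pair of elements of the graded family `G`, indexed over `v2 p q`. -/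
def f2 {G : ℕ → Type} {p q : ℕ} (a : G p) (b : G q) :
    ∀ i : Fin 2, G (v2 p q i)
  | ⟨0, _⟩ => a
  | ⟨1, _⟩ => b

theorem sum_v2 (p q : ℕ) : (∑ i, v2 p q i) = p + q := by
  rw [Fin.sum_univ_two]; rfl

theorem partial_sum_eq {n : ℕ} (k : Fin n → ℕ) (i : Fin n) :
    (∑ j ∈ Finset.univ.filter (fun j => j < i), k j) + k i
      + (∑ j ∈ Finset.univ.filter (fun j => i < j), k j) = ∑ j, k j := by
  classical
  have h2 : Finset.univ.filter (fun j => ¬ j < i)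
      = insert i (Finset.univ.filter (fun j => i < j)) := by
    ext j
    simp [not_lt, le_iff_lt_or_eq, or_comm, eq_comm]
  rw [← Finset.sum_filter_add_sum_filter_not Finset.univ (fun j => j < i) k, h2,
    Finset.sum_insert (by simp)]
  omega


section AuxLemmas

set_option linter.unusedSectionVars false

variable {G : ℕ → Type} [∀ n, Group (G n)]

theorem gcast_rfl' {m : ℕ} (h : m = m) (x : G m) : gcast G h x = x := rfl

theorem gcast_mul' {m n : ℕ} (h : m = n) (x y : G m) :
    gcast G h (x * y) = gcast G h x * gcast G h y := by subst h; rfl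

theorem gcast_one' {m n : ℕ} (h : m = n) : gcast G h (1 : G m) = 1 := by subst h; rfl

theorem gcast_gcast' {a b c : ℕ} (h : a = b) (h' : b = c) (x : G a) :
    gcast G h' (gcast G h x) = gcast G (h.trans h') x := by subst h; subst h'; rfl

theorem gcast_eq_iff' {m n : ℕ} (h : m = n) (x : G m) (y : G n) :
    gcast G h x = y ↔ x = gcast G h.symm y := by subst h; exact Iff.rfl

/-- congruence for `γ` along an equality of arity families. -/
theorem γ_hcongr (𝒢 : GroupOperad G) {n : ℕ} {k k' : Fin n → ℕ} (hk : k = k')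
    (x : G n) (xs : ∀ i, G (k i)) (xs' : ∀ i, G (k' i))
    (hxs : ∀ i, xs' i = gcast G (congrFun hk i) (xs i)) :
    𝒢.γ x xs' = gcast G (by rw [hk]) (𝒢.γ x xs) := by
  subst hk
  have hxs' : xs' = xs := funext fun i => hxs i
  subst hxs'
  rfl

/-- `γ` of group units is a group unit. -/
theorem γ_one_one (𝒢 : GroupOperad G) {n : ℕ} (k : Fin n → ℕ) :
    𝒢.γ (1 : G n) (fun i => (1 : G (k i))) = 1 := by
  have h := 𝒢.interchange (1 : G n) 1 (fun i => (1 : G (k i))) (fun i => 1)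
  rw [map_one] at h
  simp only [one_mul] at h
  exact right_eq_mul.mp h

/-- padding by a single unary element. -/
theorem pad_w (𝒢 : GroupOperad G) {k : ℕ} (w : G 1) (x : G k) :
    𝒢.γ (k := fun _ : Fin 1 => k) w (fun _ => x)
      = 𝒢.γ (k := fun _ : Fin 1 => k) (w * 𝒢.e⁻¹) (fun _ => (1 : G k))
        * gcast G (show k = ∑ _i : Fin 1, k by simp) x := by
  have h := 𝒢.interchange (w * 𝒢.e⁻¹) 𝒢.e (fun _ : Fin 1 => (1 : G k)) (fun _ => x)
  simp only [inv_mul_cancel_right, one_mul] at h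
  have h3 : 𝒢.γ (k := fun _ : Fin 1 => k) 𝒢.e (fun _ => x)
      = gcast G (show k = ∑ _i : Fin 1, k by simp) x :=
    (gcast_eq_iff' _ _ _).mp (𝒢.γ_id x)
  rw [h3] at h
  exact h

end AuxLemmas

/-- In any group operad, `γ(e₃; e₀, x, e₀) = x` in `G (0 + k + 0) = G k`. -/
theorem groupOperad_pad_trivial (G : ℕ → Type) [∀ n, Group (G n)]
    (𝒢 : GroupOperad G) (k : ℕ) (x : G k) :
    gcast G ((sum_v3 0 k 0).trans (by omega))
      (𝒢.γ (1 : G 3) (f3 (1 : G 0) x (1 : G 0))) = x := by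
  have s1 : (∑ i, v3 0 1 0 i) = 1 := rfl
  have hk : (fun i => ∑ _s : Fin (v3 0 1 0 i), k) = v3 0 k 0 := by
    funext i; fin_cases i
    · show ∑ _s : Fin 0, k = 0; simp
    · show ∑ _s : Fin 1, k = k; simp
    · show ∑ _s : Fin 0, k = 0; simp
  have hk1 : k = ∑ _i : Fin 1, k := by simp
  have h' : (∑ _i : Fin 1, k) = ∑ i, v3 0 k 0 i := by
    rw [sum_v3]; simp
  have key : ∀ y : G k, 𝒢.γ (1 : G 3) (f3 (1 : G 0) y (1 : G 0))
      = gcast G h'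
          (𝒢.γ (k := fun _ : Fin 1 => k)
              (gcast G s1 (𝒢.γ (1 : G 3) (f3 (1 : G 0) 𝒢.e (1 : G 0))) * 𝒢.e⁻¹)
              (fun _ => (1 : G k))
            * gcast G hk1 y) := by
    intro y
    have hxs : ∀ i, f3 (1 : G 0) y (1 : G 0) i
        = gcast G (congrFun hk i) (𝒢.γ (f3 (1 : G 0) 𝒢.e (1 : G 0) i) (fun _ => y)) := by
      intro i
      fin_cases i
      · have hfam : (fun _ : Fin 0 => y) = (fun s : Fin 0 => (1 : G ((fun _ => k) s))) :=
          funext fun s => s.elim0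
        show (1 : G 0) = gcast G _ (𝒢.γ (1 : G 0) (fun _ : Fin 0 => y))
        rw [hfam, γ_one_one 𝒢 (fun _ : Fin 0 => k)]
        exact (gcast_one' _).symm
      · exact ((gcast_eq_iff' _ _ _).mp (𝒢.γ_id y)).symm.trans rfl
      · have hfam : (fun _ : Fin 0 => y) = (fun s : Fin 0 => (1 : G ((fun _ => k) s))) :=
          funext fun s => s.elim0
        show (1 : G 0) = gcast G _ (𝒢.γ (1 : G 0) (fun _ : Fin 0 => y))
        rw [hfam, γ_one_one 𝒢 (fun _ : Fin 0 => k)]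
        exact (gcast_one' _).symm
    have h1 := γ_hcongr 𝒢 hk (1 : G 3)
      (fun i => 𝒢.γ (f3 (1 : G 0) 𝒢.e (1 : G 0) i) (fun _ => y))
      (f3 (1 : G 0) y (1 : G 0)) hxs
    have hassoc : gcast G (flatten_sum_eq (v3 0 1 0) (fun _ _ => k))
        (𝒢.γ (k := fun _ : Fin 1 => k)
          (gcast G s1 (𝒢.γ (1 : G 3) (f3 (1 : G 0) 𝒢.e (1 : G 0)))) (fun _ => y))
        = 𝒢.γ (1 : G 3) (fun i => 𝒢.γ (f3 (1 : G 0) 𝒢.e (1 : G 0) i) (fun _ => y)) :=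
      𝒢.γ_assoc (1 : G 3) (f3 (1 : G 0) 𝒢.e (1 : G 0)) (fun _ _ => y)
    rw [h1, ← hassoc, pad_w 𝒢 _ y]
    exact gcast_gcast' _ _ _
  have hC : 𝒢.γ (k := fun _ : Fin 1 => k)
      (gcast G s1 (𝒢.γ (1 : G 3) (f3 (1 : G 0) 𝒢.e (1 : G 0))) * 𝒢.e⁻¹)
      (fun _ => (1 : G k)) = 1 := by
    have h1 := key 1
    have hfam : f3 (1 : G 0) (1 : G k) (1 : G 0) = (fun i => (1 : G (v3 0 k 0 i))) := by
      funext i; fin_cases i <;> rfl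
    rw [hfam, γ_one_one 𝒢 (v3 0 k 0), gcast_one', mul_one] at h1
    rw [(gcast_eq_iff' h' _ 1).mp h1.symm, gcast_one']
  rw [key x, hC, one_mul, gcast_gcast', gcast_gcast', gcast_rfl']
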